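/- arXiv:1811.12257 — 8 statements merged into one kernel-verified Lean document; each statement's English description precedes it below -/
import Mathlib

section
/- Let p be a probability vector on [K] with all entries positive and let W be an invertible K×K row-stochastic matrix. Then the boundary information projection is strictly positive: D(∂ℙW ‖ pW) = min over r in the boundary ∂ℙ of the simplex of D(rW ‖ pW) is attained and satisfies D(∂ℙW ‖ pW) > 0. -/
open Finset Filter Asymptotics

namespace RRStmt

def simplex (K : ℕ) : Set (Fin K → ℝ) :=
  {p | (∀ k, 0 ≤ p k) ∧ ∑ k, p k = 1}

def simplexBoundary (K : ℕ) : Set (Fin K → ℝ) :=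
  {p | p ∈ simplex K ∧ ∃ k, p k = 0}

/-- Kullback–Leibler divergence between two vectors on `Fin K`. -/
noncomputable def KL {K : ℕ} (u v : Fin K → ℝ) : ℝ :=
  ∑ k, u k * Real.log (u k / v k)

/-- Boundary information projection `D(∂ℙW ‖ pW)`. -/
noncomputable def Dbnd {K : ℕ} (p : Fin K → ℝ) (W : Matrix (Fin K) (Fin K) ℝ) : ℝ :=
  sInf ((fun r => KL (Matrix.vecMul r W) (Matrix.vecMul p W)) '' simplexBoundary K)

/-- Empirical distribution (type) of a sample sequence. -/
noncomputable def empDist {K n : ℕ} (y : Fin n → Fin K) : Fin K → ℝ :=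
  fun k => ((Finset.univ.filter fun i => y i = k).card : ℝ) / n

/-- Expectation of `g` under `n` i.i.d. samples with distribution `q`. -/
noncomputable def iidE {K : ℕ} (q : Fin K → ℝ) (n : ℕ) (g : (Fin n → Fin K) → ℝ) : ℝ :=
  ∑ y : Fin n → Fin K, (∏ i, q (y i)) * g y

open Classical in
/-- Probability of event `E` under `n` i.i.d. samples with distribution `q`. -/
noncomputable def iidP {K : ℕ} (q : Fin K → ℝ) (n : ℕ) (E : Set (Fin n → Fin K)) : ℝ :=
  ∑ y : Fin n → Fin K, if y ∈ E then ∏ i, q (y i) else 0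

def RowStochastic {K : ℕ} (W : Matrix (Fin K) (Fin K) ℝ) : Prop :=
  (∀ i j, 0 ≤ W i j) ∧ ∀ i, ∑ j, W i j = 1

def EpsPrivate {K : ℕ} (ε : ℝ) (W : Matrix (Fin K) (Fin K) ℝ) : Prop :=
  ∀ k k' l, W k l ≤ Real.exp ε * W k' l

def IsCirculant {K : ℕ} (W : Matrix (Fin K) (Fin K) ℝ) : Prop :=
  ∃ w : Fin K → ℝ, ∀ i j, W i j = w (j - i)

def IsPermMatrix {K : ℕ} (W : Matrix (Fin K) (Fin K) ℝ) : Prop :=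
  ∃ σ : Equiv.Perm (Fin K), ∀ i j, W i j = if σ i = j then 1 else 0

noncomputable def nu {K : ℕ} (p : Fin K → ℝ) (W : Matrix (Fin K) (Fin K) ℝ)
    (ρ : ℕ) (k : Fin K) : ℝ :=
  ∑ j, Matrix.vecMul p W j * (W⁻¹ j k) ^ ρ

noncomputable def Phi {K : ℕ} (W : Matrix (Fin K) (Fin K) ℝ) : Matrix (Fin K) (Fin K) ℝ :=
  W * Matrix.hadamard W⁻¹ W⁻¹

noncomputable def phiSum {K : ℕ} (W : Matrix (Fin K) (Fin K) ℝ) : ℝ :=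
  ∑ k, ∑ l, Phi W k l

noncomputable def stepMech (K : ℕ) (ε : ℝ) : Matrix (Fin K) (Fin K) ℝ :=
  Matrix.of fun i j => if i = j then Real.exp ε / (Real.exp ε + K - 1)
                       else 1 / (Real.exp ε + K - 1)


lemma sum_vecMul_eq_one {K : ℕ} (r : Fin K → ℝ) (W : Matrix (Fin K) (Fin K) ℝ)
    (hWrow : ∀ i, ∑ j, W i j = 1) (hr : ∑ j, r j = 1) :
    ∑ k, Matrix.vecMul r W k = 1 := by
  simp only [Matrix.vecMul, dotProduct]
  rw [Finset.sum_comm]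
  calc ∑ j, ∑ k, r j * W j k = ∑ j, r j * ∑ k, W j k := by
        simp [Finset.mul_sum]
    _ = 1 := by simp [hWrow, hr]

lemma vecMul_nonneg {K : ℕ} (r : Fin K → ℝ) (W : Matrix (Fin K) (Fin K) ℝ)
    (hW0 : ∀ i j, 0 ≤ W i j) (hr : ∀ j, 0 ≤ r j) (k : Fin K) :
    0 ≤ Matrix.vecMul r W k := by
  simp only [Matrix.vecMul, dotProduct]
  exact Finset.sum_nonneg fun j _ => mul_nonneg (hr j) (hW0 j k)

lemma vecMul_pos {K : ℕ} (p : Fin K → ℝ) (hp : ∀ k, 0 < p k)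
    (W : Matrix (Fin K) (Fin K) ℝ) (hW0 : ∀ i j, 0 ≤ W i j) (hWinv : IsUnit W)
    (k : Fin K) : 0 < Matrix.vecMul p W k := by
  have hdet : IsUnit W.det := (Matrix.isUnit_iff_isUnit_det W).mp hWinv
  have hnn : 0 ≤ Matrix.vecMul p W k :=
    vecMul_nonneg p W hW0 (fun j => (hp j).le) k
  rcases lt_or_eq_of_le hnn with h | h
  · exact h
  · exfalso
    have hz : ∀ j, W j k = 0 := by
      intro j
      have := (Finset.sum_eq_zero_iff_of_nonneg
        (fun j _ => mul_nonneg (hp j).le (hW0 j k))).mp (by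
          simpa [Matrix.vecMul, dotProduct] using h.symm) j (Finset.mem_univ j)
      rcases mul_eq_zero.mp this with h1 | h1
      · exact absurd h1 (hp j).ne'
      · exact h1
    have h1 : (W⁻¹ * W) k k = 1 := by
      rw [Matrix.nonsing_inv_mul W hdet]; simp
    have h0 : (W⁻¹ * W) k k = 0 := by
      simp [Matrix.mul_apply, hz]
    rw [h1] at h0; exact one_ne_zero h0

/-- Strict Gibbs inequality. -/
lemma gibbs_lt {K : ℕ} (u v : Fin K → ℝ) (hu : ∀ k, 0 ≤ u k) (hv : ∀ k, 0 < v k)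
    (husum : ∑ k, u k = 1) (hvsum : ∑ k, v k = 1) (hne : u ≠ v) :
    0 < KL u v := by
  have key : ∀ k, u k - v k ≤ u k * Real.log (u k / v k) := by
    intro k
    rcases eq_or_lt_of_le (hu k) with h0 | h0
    · rw [← h0]; simp
      all_goals linarith [hv k]
    · have hx : 0 < v k / u k := div_pos (hv k) h0
      have hlog : Real.log (v k / u k) ≤ v k / u k - 1 :=
        Real.log_le_sub_one_of_pos hx
      have heq : Real.log (u k / v k) = -Real.log (v k / u k) := by
        rw [← Real.log_inv]; congr 1; field_simp
      rw [heq]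
      have := mul_le_mul_of_nonneg_left hlog (hu k)
      have h2 : u k * (v k / u k - 1) = v k - u k := by
        field_simp
      nlinarith
  obtain ⟨k0, hk0⟩ := Function.ne_iff.mp hne
  have strict : u k0 - v k0 < u k0 * Real.log (u k0 / v k0) := by
    rcases eq_or_lt_of_le (hu k0) with h0 | h0
    · rw [← h0]; simp
      all_goals linarith [hv k0]
    · have hx : 0 < v k0 / u k0 := div_pos (hv k0) h0
      have hx1 : v k0 / u k0 ≠ 1 := by
        intro h
        exact hk0 ((div_eq_one_iff_eq h0.ne').mp h).symm
      have hlog : Real.log (v k0 / u k0) < v k0 / u k0 - 1 :=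
        Real.log_lt_sub_one_of_pos hx hx1
      have heq : Real.log (u k0 / v k0) = -Real.log (v k0 / u k0) := by
        rw [← Real.log_inv]; congr 1; field_simp
      rw [heq]
      have := mul_lt_mul_of_pos_left hlog h0
      have h2 : u k0 * (v k0 / u k0 - 1) = v k0 - u k0 := by
        field_simp
      nlinarith
  have hsum : ∑ k, (u k - v k) < ∑ k, u k * Real.log (u k / v k) :=
    Finset.sum_lt_sum (fun k _ => key k) ⟨k0, Finset.mem_univ _, strict⟩
  have : ∑ k, (u k - v k) = 0 := by
    rw [Finset.sum_sub_distrib, husum, hvsum]; ring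
  unfold KL; linarith

lemma simplexBoundary_compact (K : ℕ) : IsCompact (simplexBoundary K) := by
  have hsub : simplexBoundary K ⊆ Set.pi Set.univ fun _ : Fin K => Set.Icc (0:ℝ) 1 := by
    rintro r ⟨⟨hr0, hrs⟩, _⟩ k _
    refine ⟨hr0 k, ?_⟩
    calc r k ≤ ∑ j, r j := Finset.single_le_sum (fun j _ => hr0 j) (Finset.mem_univ k)
      _ = 1 := hrs
  have hclosed : IsClosed (simplexBoundary K) := by
    have h1 : IsClosed {r : Fin K → ℝ | ∀ k, 0 ≤ r k} := by
      have : {r : Fin K → ℝ | ∀ k, 0 ≤ r k} = ⋂ k, {r | 0 ≤ r k} := by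
        ext r; simp
      rw [this]
      exact isClosed_iInter fun k => isClosed_le continuous_const (continuous_apply k)
    have h2 : IsClosed {r : Fin K → ℝ | ∑ k, r k = 1} :=
      isClosed_eq (continuous_finset_sum _ fun k _ => continuous_apply k) continuous_const
    have h3 : IsClosed {r : Fin K → ℝ | ∃ k, r k = 0} := by
      have : {r : Fin K → ℝ | ∃ k, r k = 0} = ⋃ k, {r | r k = 0} := by
        ext r; simp
      rw [this]
      exact isClosed_iUnion_of_finite fun k =>
        isClosed_eq (continuous_apply k) continuous_const
    have : simplexBoundary K =
        ({r : Fin K → ℝ | ∀ k, 0 ≤ r k} ∩ {r | ∑ k, r k = 1}) ∩ {r | ∃ k, r k = 0} := by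
      ext r; simp [simplexBoundary, simplex]; try tauto
    rw [this]
    exact ((h1.inter h2).inter h3)
  exact (isCompact_univ_pi fun _ => isCompact_Icc).of_isClosed_subset hclosed hsub

/-- the boundary information projection is attained and strictly positive. -/
theorem stmt_1 (K : ℕ) (hK : 2 ≤ K)
    (p : Fin K → ℝ) (hp : ∀ k, 0 < p k) (hpsum : ∑ k, p k = 1)
    (W : Matrix (Fin K) (Fin K) ℝ) (hW : RowStochastic W) (hWinv : IsUnit W) :
    IsLeast ((fun r => KL (Matrix.vecMul r W) (Matrix.vecMul p W)) '' simplexBoundary K)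
        (Dbnd p W)
      ∧ 0 < Dbnd p W := by
  obtain ⟨hW0, hWrow⟩ := hW
  have hdet : IsUnit W.det := (Matrix.isUnit_iff_isUnit_det W).mp hWinv
  set c := Matrix.vecMul p W with hc_def
  have hc : ∀ k, 0 < c k := fun k => vecMul_pos p hp W hW0 hWinv k
  have hcsum : ∑ k, c k = 1 := sum_vecMul_eq_one p W hWrow hpsum
  set f : (Fin K → ℝ) → ℝ := fun r => KL (Matrix.vecMul r W) c with hf_def
  -- nonemptiness of the boundary
  have hSne : (simplexBoundary K).Nonempty := by
    set i0 : Fin K := ⟨0, by omega⟩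
    set i1 : Fin K := ⟨1, by omega⟩
    have h01 : i1 ≠ i0 := by
      intro h
      have := congrArg Fin.val h
      simp [i0, i1] at this
    refine ⟨fun k => if k = i0 then 1 else 0, ⟨⟨fun k => ?_, ?_⟩, ⟨i1, by simp [h01]⟩⟩⟩
    · by_cases h : k = i0 <;> simp [h]
    · simp
  -- continuity of f on the boundary via a globally continuous surrogate
  set g : (Fin K → ℝ) → ℝ := fun r =>
    ∑ k, ((Matrix.vecMul r W k) * Real.log (Matrix.vecMul r W k)
      - (Matrix.vecMul r W k) * Real.log (c k)) with hg_def
  have hLcont : ∀ k, Continuous fun r : Fin K → ℝ => Matrix.vecMul r W k := by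
    intro k
    have : (fun r : Fin K → ℝ => Matrix.vecMul r W k)
        = fun r => ∑ j, r j * W j k := by
      ext r; simp [Matrix.vecMul, dotProduct]
    rw [this]
    exact continuous_finset_sum _ fun j _ => (continuous_apply j).mul continuous_const
  have hgcont : Continuous g := by
    apply continuous_finset_sum
    intro k _
    exact (Real.continuous_mul_log.comp (hLcont k)).sub ((hLcont k).mul continuous_const)
  have hEq : Set.EqOn f g (simplexBoundary K) := by
    rintro r ⟨⟨hr0, hrs⟩, _⟩
    simp only [hf_def, hg_def, KL]
    apply Finset.sum_congr rfl
    intro k _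
    rcases eq_or_lt_of_le (vecMul_nonneg r W hW0 hr0 k) with h0 | h0
    · rw [← h0]; simp
    · rw [Real.log_div h0.ne' (hc k).ne']; ring
  have hfcont : ContinuousOn f (simplexBoundary K) :=
    hgcont.continuousOn.congr hEq
  -- compact image
  have himg : IsCompact (f '' simplexBoundary K) :=
    (simplexBoundary_compact K).image_of_continuousOn hfcont
  have himgne : (f '' simplexBoundary K).Nonempty := hSne.image f
  have hbdd : BddBelow (f '' simplexBoundary K) := himg.bddBelow
  have hmem : sInf (f '' simplexBoundary K) ∈ f '' simplexBoundary K :=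
    himg.sInf_mem himgne
  have hleast : IsLeast (f '' simplexBoundary K) (Dbnd p W) := by
    constructor
    · exact hmem
    · exact fun x hx => csInf_le hbdd hx
  refine ⟨hleast, ?_⟩
  -- positivity
  obtain ⟨r, hrS, hrval⟩ := hmem
  rw [show Dbnd p W = sInf (f '' simplexBoundary K) from rfl, ← hrval]
  obtain ⟨⟨hr0, hrs⟩, k0, hk0⟩ := hrS
  apply gibbs_lt _ _ (vecMul_nonneg r W hW0 hr0) hc
    (sum_vecMul_eq_one r W hWrow hrs) hcsum
  intro heq
  have hrp : r = p := by
    have h2 : Matrix.vecMul (Matrix.vecMul r W) W⁻¹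
        = Matrix.vecMul (Matrix.vecMul p W) W⁻¹ := by rw [heq]
    rwa [Matrix.vecMul_vecMul, Matrix.vecMul_vecMul, Matrix.mul_nonsing_inv W hdet,
      Matrix.vecMul_one, Matrix.vecMul_one] at h2
  exact (hp k0).ne' (by rw [← hrp]; exact hk0)

end RRStmt
end

section
/- Let W and W' be invertible K×K row-stochastic matrices. Then Φ(WW') ≥ Φ(W) holds entrywise, i.e. [Φ(WW')]_{k,ℓ} ≥ [Φ(W)]_{k,ℓ} for all k, ℓ ∈ [K]; moreover equality holds in all K² entries if and only if W' is a permutation matrix. -/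
open Finset Filter Asymptotics

namespace RRStmt

/-!
Write `A = W⁻¹` and `X = (W W')⁻¹ = W'⁻¹ A`, so that `W' X = A`. Since every row of `W'` is a
probability vector, `(W' (X ⊙ X))ₘₗ = Aₘₗ² + Vₘₗ`, where `Vₘₗ ≥ 0` is the variance of column `l` of
`X` under the weights of row `m` of `W'`; hence `Φ(W W') = Φ(W) + W V ≥ Φ(W)`. Equality means
`W V = 0`, i.e. `V = 0` since `W` is invertible. Then `W' m j ≠ 0` forces row `j` of `X` to equal
row `m` of `A`, i.e. row `j` of `W'⁻¹` is the unit row `eₘ`; from `W'⁻¹ W' = 1` the row `m` of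
`W'` is then the unit row `eⱼ`, so `W'` is a permutation matrix. Conversely a permutation matrix
has point-mass rows, so `V = 0`.
-/

open scoped Matrix

section RowVariance

variable {ι κ τ : Type*} [Fintype κ]

noncomputable def rowVariance (P : Matrix ι κ ℝ) (X : Matrix κ τ ℝ) : Matrix ι τ ℝ :=
  Matrix.of fun i l => ∑ j, P i j * (X j l - (P * X) i l) ^ 2

theorem mul_hadamard_self_eq_add_rowVariance (P : Matrix ι κ ℝ) (X : Matrix κ τ ℝ)
    (hP : ∀ i, ∑ j, P i j = 1) :
    P * (X ⊙ X) = (P * X) ⊙ (P * X) + rowVariance P X := by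
  ext i l
  set μ := (P * X) i l with hμ
  have hmean : ∑ j, P i j * X j l = μ := Matrix.mul_apply.symm
  have hexpand : ∀ j, P i j * (X j l * X j l)
      = P i j * (X j l - μ) ^ 2 + 2 * μ * (P i j * X j l) - μ ^ 2 * P i j := fun j => by ring
  rw [Matrix.add_apply, Matrix.mul_apply]
  simp only [Matrix.hadamard_apply, rowVariance, Matrix.of_apply, ← hμ, hexpand,
    Finset.sum_sub_distrib, Finset.sum_add_distrib, ← Finset.mul_sum, hmean, hP i]
  ring

theorem rowVariance_nonneg {P : Matrix ι κ ℝ} (hP : ∀ i j, 0 ≤ P i j) (X : Matrix κ τ ℝ)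
    (i : ι) (l : τ) : 0 ≤ rowVariance P X i l :=
  Finset.sum_nonneg fun j _ => mul_nonneg (hP i j) (sq_nonneg _)

theorem rowVariance_eq_zero_iff {P : Matrix ι κ ℝ} (hP : ∀ i j, 0 ≤ P i j)
    (X : Matrix κ τ ℝ) (i : ι) (l : τ) :
    rowVariance P X i l = 0 ↔ ∀ j, P i j ≠ 0 → X j l = (P * X) i l := by
  simp only [rowVariance, Matrix.of_apply]
  rw [Finset.sum_eq_zero_iff_of_nonneg fun j _ => mul_nonneg (hP i j) (sq_nonneg _)]
  simp only [Finset.mem_univ, true_implies, mul_eq_zero, pow_eq_zero_iff two_ne_zero, sub_eq_zero]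
  exact forall_congr' fun j => or_iff_not_imp_left

end RowVariance

theorem IsPermMatrix.rowVariance_eq_zero {K : ℕ} {τ : Type*} {P : Matrix (Fin K) (Fin K) ℝ}
    (hP : IsPermMatrix P) (X : Matrix (Fin K) τ ℝ) : rowVariance P X = 0 := by
  obtain ⟨σ, hσ⟩ := hP
  ext i l
  simp [rowVariance, Matrix.mul_apply, hσ]

theorem isPermMatrix_of_inv_rows_eq_single {K : ℕ} {P : Matrix (Fin K) (Fin K) ℝ}
    (hP : ∀ i, ∑ j, P i j = 1) (hPinv : IsUnit P)
    (hrows : ∀ m j, P m j ≠ 0 → ∀ i, P⁻¹ j i = if m = i then 1 else 0) :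
    IsPermMatrix P := by
  have hrow_single : ∀ m j, P m j ≠ 0 → ∀ j', P m j' = if j = j' then 1 else 0 := by
    intro m j hmj j'
    have h := congrFun (congrFun
      (Matrix.nonsing_inv_mul P ((Matrix.isUnit_iff_isUnit_det P).mp hPinv)) j) j'
    simpa [Matrix.mul_apply, hrows m j hmj, Matrix.one_apply] using h
  have hex : ∀ m, ∃ j, P m j ≠ 0 := fun m => by
    by_contra! h
    simpa [h] using hP m
  choose f hf using hex
  have hf_inj : f.Injective := fun m m' hmm' => by
    have h := hrows m' (f m') (hf m') m
    rw [← hmm', hrows m (f m) (hf m) m] at h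
    simpa [eq_comm] using h
  exact ⟨Equiv.ofBijective f (Finite.injective_iff_bijective.mp hf_inj),
    fun m => hrow_single m (f m) (hf m)⟩

section Phi

variable {K : ℕ} {W W' : Matrix (Fin K) (Fin K) ℝ}

theorem Phi_mul_eq_add_rowVariance (hW' : ∀ i, ∑ j, W' i j = 1) (hW'inv : IsUnit W') :
    Phi (W * W') = Phi W + W * rowVariance W' (W'⁻¹ * W⁻¹) := by
  have hmean : W' * (W'⁻¹ * W⁻¹) = W⁻¹ :=
    Matrix.mul_nonsing_inv_cancel_left _ _ ((Matrix.isUnit_iff_isUnit_det W').mp hW'inv)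
  rw [Phi, Phi, Matrix.mul_inv_rev, Matrix.mul_assoc, mul_hadamard_self_eq_add_rowVariance _ _ hW',
    hmean, Matrix.mul_add]

theorem inv_rows_eq_single_of_rowVariance_eq_zero (hW'nonneg : ∀ i j, 0 ≤ W' i j)
    (hWinv : IsUnit W) (hW'inv : IsUnit W') (hV : rowVariance W' (W'⁻¹ * W⁻¹) = 0)
    (m j : Fin K) (hmj : W' m j ≠ 0) (i : Fin K) :
    W'⁻¹ j i = if m = i then 1 else 0 := by
  have hdW := (Matrix.isUnit_iff_isUnit_det W).mp hWinv
  have hmean : W' * (W'⁻¹ * W⁻¹) = W⁻¹ :=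
    Matrix.mul_nonsing_inv_cancel_left _ _ ((Matrix.isUnit_iff_isUnit_det W').mp hW'inv)
  have hrow : ∀ l, (W'⁻¹ * W⁻¹) j l = W⁻¹ m l := fun l => by
    simpa only [hmean] using
      (rowVariance_eq_zero_iff hW'nonneg _ m l).mp (congrFun (congrFun hV m) l) j hmj
  calc W'⁻¹ j i = (W'⁻¹ * W⁻¹ * W) j i := by
        rw [Matrix.mul_assoc, Matrix.nonsing_inv_mul W hdW, Matrix.mul_one]
    _ = (W⁻¹ * W) m i := by simp only [Matrix.mul_apply, hrow]
    _ = if m = i then 1 else 0 := by rw [Matrix.nonsing_inv_mul W hdW, Matrix.one_apply]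

end Phi

theorem stmt_7_general (K : ℕ)
    (W W' : Matrix (Fin K) (Fin K) ℝ)
    (hW : RowStochastic W) (hW' : RowStochastic W')
    (hWinv : IsUnit W) (hW'inv : IsUnit W') :
    (∀ k l, Phi W k l ≤ Phi (W * W') k l) ∧
      ((∀ k l, Phi (W * W') k l = Phi W k l) ↔ IsPermMatrix W') := by
  have hdecomp := Phi_mul_eq_add_rowVariance (W := W) hW'.2 hW'inv
  refine ⟨fun k l => ?_, ⟨fun heq => ?_, fun hperm => ?_⟩⟩
  · rw [hdecomp, Matrix.add_apply, le_add_iff_nonneg_right, Matrix.mul_apply]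
    exact Finset.sum_nonneg fun m _ => mul_nonneg (hW.1 k m) (rowVariance_nonneg hW'.1 _ m l)
  · have hWV : W * rowVariance W' (W'⁻¹ * W⁻¹) = 0 := by
      ext k l
      simpa [hdecomp] using heq k l
    have hV : rowVariance W' (W'⁻¹ * W⁻¹) = 0 := by
      rw [← Matrix.nonsing_inv_mul_cancel_left W (rowVariance W' (W'⁻¹ * W⁻¹))
        ((Matrix.isUnit_iff_isUnit_det W).mp hWinv), hWV, Matrix.mul_zero]
    exact isPermMatrix_of_inv_rows_eq_single hW'.2 hW'inv
      (inv_rows_eq_single_of_rowVariance_eq_zero hW'.1 hWinv hW'inv hV)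
  · intro k l
    rw [hdecomp, hperm.rowVariance_eq_zero, Matrix.mul_zero, add_zero]

/-- data-processing inequality for `Φ`, with equality iff `W'` is a permutation. -/
theorem stmt_7 (K : ℕ) (hK : 2 ≤ K)
    (W W' : Matrix (Fin K) (Fin K) ℝ)
    (hW : RowStochastic W) (hW' : RowStochastic W')
    (hWinv : IsUnit W) (hW'inv : IsUnit W') :
    (∀ k l, Phi W k l ≤ Phi (W * W') k l) ∧
      ((∀ k l, Phi (W * W') k l = Phi W k l) ↔ IsPermMatrix W') :=
  stmt_7_general K W W' hW hW' hWinv hW'inv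

end RRStmt
end

section
/- Let W be an invertible K×K row-stochastic matrix. Then Φ(W) ≥ I entrywise: the diagonal entries of Φ(W) satisfy [Φ(W)]_{k,k} ≥ 1 for all k, and the off-diagonal entries satisfy [Φ(W)]_{k,ℓ} ≥ 0 for all k ≠ ℓ. -/
open Finset Filter Asymptotics

namespace RRStmt

/-- `Φ(W) ≥ I` entrywise. -/
theorem stmt_8 (K : ℕ) (hK : 2 ≤ K)
    (W : Matrix (Fin K) (Fin K) ℝ) (hW : RowStochastic W) (hWinv : IsUnit W) :
    (∀ k, 1 ≤ Phi W k k) ∧ ∀ k l, k ≠ l → 0 ≤ Phi W k l := by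
  have hPhi : ∀ k l, Phi W k l = ∑ j, W k j * (W⁻¹ j l) ^ 2 := by
    intro k l
    simp [Phi, Matrix.mul_apply, Matrix.hadamard, sq]
  have hmul : W * W⁻¹ = 1 := Matrix.mul_nonsing_inv W
    ((Matrix.isUnit_iff_isUnit_det W).mp hWinv)
  constructor
  · intro k
    have h1 : ∑ j, W k j * W⁻¹ j k = 1 := by
      have := congrFun (congrFun hmul k) k
      simpa [Matrix.mul_apply, Matrix.one_apply] using this
    have hcs := sum_mul_sq_le_sq_mul_sq univ (fun j => Real.sqrt (W k j))
      (fun j => Real.sqrt (W k j) * W⁻¹ j k)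
    have e1 : ∀ j, Real.sqrt (W k j) * (Real.sqrt (W k j) * W⁻¹ j k)
        = W k j * W⁻¹ j k := by
      intro j
      rw [← mul_assoc, Real.mul_self_sqrt (hW.1 k j)]
    have e2 : ∀ j, Real.sqrt (W k j) ^ 2 = W k j := fun j => Real.sq_sqrt (hW.1 k j)
    have e3 : ∀ j, (Real.sqrt (W k j) * W⁻¹ j k) ^ 2 = W k j * (W⁻¹ j k) ^ 2 := by
      intro j; rw [mul_pow, e2]
    simp only [e1, e3] at hcs
    rw [h1] at hcs
    simp only [e2] at hcs
    rw [hW.2 k, one_mul, one_pow] at hcs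
    rw [hPhi]
    exact hcs
  · intro k l _
    rw [hPhi]
    exact Finset.sum_nonneg fun j _ => mul_nonneg (hW.1 k j) (sq_nonneg _)

end RRStmt
end

section
/- Let W be an invertible circulant K×K row-stochastic matrix. Then every column sum of Φ(W) equals φ(W)/K, i.e. Σ_{ℓ=1}^{K} [Φ(W)]_{ℓ,k} = φ(W)/K for every k ∈ [K]. Consequently, for the uniform source p = (1/K,…,1/K), the three closed-form fidelity metrics coincide: (p·Φ(W)·p^{−T} − 1)/(K−1) = (p·Φ(W)·𝟙ᵀ − ‖p‖₂²)/(1 − ‖p‖₂²) = ( Σ_k √( [p·Φ(W)]_k − p_k² ) / Σ_k √( p_k − p_k² ) )² = (φ(W) − 1)/(K−1), where p^{−T} denotes the column vector of entrywise reciprocals of p. -/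
open Finset Filter Asymptotics

namespace RRStmt

section Aux
variable {K : ℕ} [NeZero K] {W : Matrix (Fin K) (Fin K) ℝ}

lemma inv_shift (hWc : IsCirculant W) (hWinv : IsUnit W) (t i j : Fin K) :
    W⁻¹ (i + t) (j + t) = W⁻¹ i j := by
  obtain ⟨w, hw⟩ := hWc
  have hdet : IsUnit W.det := (Matrix.isUnit_iff_isUnit_det W).1 hWinv
  have hshift : ∀ a b : Fin K, W (a + t) (b + t) = W a b := by
    intro a b; rw [hw, hw]; congr 1; abel
  have hM : W⁻¹ = Matrix.of (fun a b => W⁻¹ (a + t) (b + t)) := by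
    apply Matrix.inv_eq_right_inv
    ext a b
    simp only [Matrix.mul_apply, Matrix.of_apply]
    have : ∑ k, W a k * W⁻¹ (k + t) (b + t)
        = ∑ k, W (a + t) k * W⁻¹ k (b + t) := by
      refine Fintype.sum_equiv (Equiv.addRight t) _ _ ?_
      intro k
      simp only [Equiv.coe_addRight]
      rw [hshift a k]
    rw [this]
    have := Matrix.mul_nonsing_inv W hdet
    have h1 : (W * W⁻¹) (a + t) (b + t) = (1 : Matrix (Fin K) (Fin K) ℝ) (a + t) (b + t) := by
      rw [this]
    simp only [Matrix.mul_apply] at h1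
    rw [h1]
    by_cases hab : a = b
    · subst hab; simp [Matrix.one_apply]
    · have : a + t ≠ b + t := fun h => hab (by
        have := congrArg (· - t) h; simpa using this)
      simp [Matrix.one_apply, hab, this]
  have h := congrFun (congrFun hM i) j
  simpa using h.symm

lemma phi_shift (hWc : IsCirculant W) (hWinv : IsUnit W) (t i j : Fin K) :
    Phi W (i + t) (j + t) = Phi W i j := by
  obtain ⟨w, hw⟩ := hWc
  have hshift : ∀ a b : Fin K, W (a + t) (b + t) = W a b := by
    intro a b; rw [hw, hw]; congr 1; abel
  simp only [Phi, Matrix.mul_apply, Matrix.hadamard_apply]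
  refine (Fintype.sum_equiv (Equiv.addRight t) _ _ ?_).symm
  intro k
  simp only [Equiv.coe_addRight]
  rw [hshift i k, inv_shift ⟨w, hw⟩ hWinv t k j]

lemma colsum_eq (hWc : IsCirculant W) (hWinv : IsUnit W) (k k' : Fin K) :
    ∑ l, Phi W l k = ∑ l, Phi W l k' := by
  refine Fintype.sum_equiv (Equiv.addRight (k' - k)) _ _ ?_
  intro l
  simp only [Equiv.coe_addRight]
  have h : k + (k' - k) = k' := by abel
  rw [← phi_shift hWc hWinv (k' - k) l k, h]

lemma colsum (hWc : IsCirculant W) (hWinv : IsUnit W) (k : Fin K) :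
    ∑ l, Phi W l k = phiSum W / K := by
  have h : phiSum W = ∑ k' : Fin K, ∑ l, Phi W l k' := by
    rw [phiSum, Finset.sum_comm]
  have h2 : ∀ k' : Fin K, ∑ l, Phi W l k' = ∑ l, Phi W l k :=
    fun k' => colsum_eq hWc hWinv k' k
  rw [h, Finset.sum_congr rfl (fun k' _ => h2 k'), Finset.sum_const, Finset.card_univ,
    Fintype.card_fin, nsmul_eq_mul]
  have hK : (K : ℝ) ≠ 0 := Nat.cast_ne_zero.2 (NeZero.ne K)
  field_simp

lemma phiSum_ge_one (hW : RowStochastic W) (hWc : IsCirculant W) (hWinv : IsUnit W) :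
    1 ≤ phiSum W := by
  obtain ⟨w, hw⟩ := hWc
  have hdet : IsUnit W.det := (Matrix.isUnit_iff_isUnit_det W).1 hWinv
  -- column sums of W are 1
  have hcol : ∀ j, ∑ k, W k j = 1 := by
    intro j
    have : ∑ k, W k j = ∑ k, W j k := by
      refine Fintype.sum_equiv (Equiv.subLeft (j + j)) _ _ ?_
      intro k
      rw [hw, hw]
      congr 1
      simp [Equiv.subLeft]
      abel
    rw [this, hW.2 j]
  -- row sums of W⁻¹ are 1
  have hinvrow : ∀ j, ∑ l, W⁻¹ j l = 1 := by
    intro j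
    have h1 : ∑ l, W⁻¹ j l = ∑ l, W⁻¹ j l * (∑ m, W l m) := by
      simp [hW.2]
    rw [h1]
    simp_rw [Finset.mul_sum]
    rw [Finset.sum_comm]
    have : ∀ m, ∑ l, W⁻¹ j l * W l m = (W⁻¹ * W) j m := by
      intro m; simp [Matrix.mul_apply]
    simp_rw [this, Matrix.nonsing_inv_mul W hdet]
    simp [Matrix.one_apply]
  -- phiSum = ∑_j ∑_l (W⁻¹ j l)²
  have hphi : phiSum W = ∑ j, ∑ l, (W⁻¹ j l) ^ 2 := by
    simp only [phiSum, Phi, Matrix.mul_apply, Matrix.hadamard_apply]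
    rw [Finset.sum_comm]
    -- now: ∑ l ∑ k ∑ j W k j * (W⁻¹ j l * W⁻¹ j l)
    have : ∀ l : Fin K, ∑ k, ∑ j, W k j * (W⁻¹ j l * W⁻¹ j l)
        = ∑ j, (W⁻¹ j l) ^ 2 := by
      intro l
      rw [Finset.sum_comm]
      refine Finset.sum_congr rfl fun j _ => ?_
      rw [← Finset.sum_mul, hcol j]
      ring
    rw [Finset.sum_congr rfl fun l _ => this l, Finset.sum_comm]
  rw [hphi]
  have hKpos : (0:ℝ) < K := by
    have := NeZero.pos K
    exact_mod_cast this
  have key : ∀ j : Fin K, 1/(K:ℝ) ≤ ∑ l, (W⁻¹ j l) ^ 2 := by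
    intro j
    have := sq_sum_le_card_mul_sum_sq (s := Finset.univ) (f := fun l => W⁻¹ j l)
    rw [hinvrow j] at this
    simp only [Finset.card_univ, Fintype.card_fin, one_pow] at this
    rw [div_le_iff₀ hKpos]
    calc (1:ℝ) ≤ K * ∑ l, (W⁻¹ j l)^2 := by exact_mod_cast this
    _ = (∑ l, (W⁻¹ j l)^2) * K := by ring
  calc (1:ℝ) = ∑ _j : Fin K, 1/(K:ℝ) := by
        rw [Finset.sum_const, Finset.card_univ, Fintype.card_fin, nsmul_eq_mul]
        field_simp
    _ ≤ ∑ j, ∑ l, (W⁻¹ j l)^2 := Finset.sum_le_sum fun j _ => key j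

end Aux

/-- for circulant mechanisms all column sums of `Φ(W)` equal `φ(W)/K`,
and for the uniform source the three closed-form fidelity metrics coincide. -/
theorem stmt_9 (K : ℕ) (hK : 2 ≤ K)
    (W : Matrix (Fin K) (Fin K) ℝ) (hW : RowStochastic W)
    (hWc : IsCirculant W) (hWinv : IsUnit W) :
    (∀ k, ∑ l, Phi W l k = phiSum W / K) ∧
    ∀ p : Fin K → ℝ, (∀ k, p k = 1 / K) →
      (((∑ k, ∑ l, p k * Phi W k l / p l) - 1) / (K - 1) = (phiSum W - 1) / (K - 1) ∧
       ((∑ k, ∑ l, p k * Phi W k l) - ∑ k, p k ^ 2) / (1 - ∑ k, p k ^ 2)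
          = (phiSum W - 1) / (K - 1) ∧
       ((∑ k, Real.sqrt ((∑ l, p l * Phi W l k) - p k ^ 2)) /
            (∑ k, Real.sqrt (p k - p k ^ 2))) ^ 2
          = (phiSum W - 1) / (K - 1)) := by
  haveI : NeZero K := ⟨by omega⟩
  have hKR : (2:ℝ) ≤ (K:ℝ) := by exact_mod_cast hK
  have hK0 : (K:ℝ) ≠ 0 := by positivity
  have hKpos : (0:ℝ) < K := by linarith
  have hK1 : (0:ℝ) < (K:ℝ) - 1 := by linarith
  have hS1 : (0:ℝ) ≤ phiSum W - 1 := by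
    have := phiSum_ge_one hW hWc hWinv; linarith
  refine ⟨colsum hWc hWinv, fun p hp => ?_⟩
  have hsum2 : ∑ k : Fin K, p k ^ 2 = 1 / K := by
    simp only [hp]
    rw [Finset.sum_const, Finset.card_univ, Fintype.card_fin, nsmul_eq_mul]
    field_simp
  refine ⟨?_, ?_, ?_⟩
  · congr 2
    refine Finset.sum_congr rfl fun k _ => Finset.sum_congr rfl fun l _ => ?_
    rw [hp k, hp l, mul_comm, mul_div_assoc, div_self (by positivity), mul_one]
  · have h1 : ∑ k, ∑ l, p k * Phi W k l = (1/K) * phiSum W := by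
      simp only [hp, phiSum, Finset.mul_sum]
    rw [h1, hsum2]
    rw [div_eq_div_iff (by rw [sub_ne_zero]; intro h; field_simp at h; linarith)
      (ne_of_gt hK1)]
    field_simp
  · have hin : ∀ k : Fin K, (∑ l, p l * Phi W l k) - p k ^ 2
        = (phiSum W - 1) / (K:ℝ)^2 := by
      intro k
      have h2 : ∑ l, p l * Phi W l k = (1/K) * (phiSum W / K) := by
        simp only [hp]
        rw [← Finset.mul_sum, colsum hWc hWinv k]
      rw [h2, hp k]
      field_simp
    have hden : ∀ k : Fin K, p k - p k ^ 2 = ((K:ℝ) - 1) / (K:ℝ)^2 := by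
      intro k; rw [hp k]; field_simp
    simp only [hin, hden]
    rw [Finset.sum_const, Finset.sum_const, Finset.card_univ, Fintype.card_fin]
    simp only [nsmul_eq_mul]
    have hsq : Real.sqrt ((phiSum W - 1) / (K:ℝ)^2)
        = Real.sqrt (phiSum W - 1) / K := by
      rw [Real.sqrt_div hS1, Real.sqrt_sq (le_of_lt hKpos)]
    have hsq2 : Real.sqrt (((K:ℝ) - 1) / (K:ℝ)^2)
        = Real.sqrt ((K:ℝ) - 1) / K := by
      rw [Real.sqrt_div (le_of_lt hK1), Real.sqrt_sq (le_of_lt hKpos)]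
    rw [hsq, hsq2, mul_div_cancel₀ _ hK0, mul_div_cancel₀ _ hK0,
      div_pow, Real.sq_sqrt hS1, Real.sq_sqrt (le_of_lt hK1)]


end RRStmt
end

section
/- Fix ε > 0 and K ≥ 2, and let W_{ε,⋆} be the step mechanism with diagonal entries e^ε/(e^ε+K−1) and off-diagonal entries 1/(e^ε+K−1). Then W_{ε,⋆} is invertible and: (i) [Φ(W_{ε,⋆})]_{k,ℓ} = (1/(e^ε−1)²)·[ (e^ε(e^ε+K−2)+1−e^ε)·δ_{k,ℓ} + (e^ε+K−2)·(1−δ_{k,ℓ}) ] for all k, ℓ; (ii) φ(W_{ε,⋆}) = (K/(e^ε−1)²)·[ (e^ε+K−1)(e^ε+K−2) + 1 − e^ε ]. -/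
/-!
The step mechanism is `a • 1 + b • J` with `J` the all-ones matrix, `a = (e^ε - 1)/(e^ε + K - 1)`
and `b = 1/(e^ε + K - 1)`. Since `J * J = K • J`, matrices of the form `a • 1 + b • J` are closed
under multiplication, Hadamard product and (when `a ≠ 0`, `a + K b ≠ 0`) inversion, with explicit
coefficients. Row-stochasticity means `a + K b = 1`, and then `Φ(a • 1 + b • J)` is again of this
form, with coefficients `(1 - 2b)/a` and `b(1 - b)/a²`; specialising gives both closed forms.
-/

open Finset Filter Asymptotics

namespace RRStmt

open Matrix

section AllOnes

variable {n R 𝕜 : Type*}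

def allOnes (n R : Type*) [One R] : Matrix n n R := Matrix.of fun _ _ => 1

@[simp]
lemma allOnes_apply [One R] (i j : n) : allOnes n R i j = 1 := rfl

lemma allOnes_mul_allOnes [Fintype n] [NonAssocSemiring R] :
    allOnes n R * allOnes n R = (Fintype.card n : R) • allOnes n R := by
  ext i j
  simp [mul_apply]

variable [DecidableEq n]

lemma smul_one_add_smul_allOnes_apply [CommRing R] (a b : R) (i j : n) :
    (a • 1 + b • allOnes n R) i j = if i = j then a + b else b := by
  by_cases h : i = j <;> simp [h, one_apply]

lemma smul_one_add_smul_allOnes_hadamard [CommRing R] (a b c d : R) :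
    (a • 1 + b • allOnes n R) ⊙ (c • 1 + d • allOnes n R) =
      (a * c + a * d + b * c) • 1 + (b * d) • allOnes n R := by
  ext i j
  simp only [hadamard_apply, smul_one_add_smul_allOnes_apply]
  split_ifs <;> ring

variable [Fintype n]

section CommRing

variable [CommRing R]

lemma smul_one_add_smul_allOnes_mul (a b c d : R) :
    (a • 1 + b • allOnes n R) * (c • 1 + d • allOnes n R) =
      (a * c) • 1 + (a * d + b * c + Fintype.card n * b * d) • allOnes n R := by
  simp only [add_mul, mul_add, smul_mul_smul_comm, one_mul, mul_one, allOnes_mul_allOnes,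
    smul_smul]
  module

lemma sum_sum_smul_one_add_smul_allOnes (a b : R) :
    ∑ i, ∑ j, (a • 1 + b • allOnes n R) i j =
      Fintype.card n * a + Fintype.card n ^ 2 * b := by
  have h (i j : n) : (a • 1 + b • allOnes n R) i j = (if i = j then a else 0) + b := by
    rw [smul_one_add_smul_allOnes_apply]
    split_ifs <;> simp
  simp [h, Finset.sum_add_distrib]
  ring

end CommRing

variable [Field 𝕜]

lemma smul_one_add_smul_allOnes_mul_inv {a b : 𝕜} (ha : a ≠ 0)
    (hab : a + Fintype.card n * b ≠ 0) :
    (a • 1 + b • allOnes n 𝕜) *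
      (a⁻¹ • 1 + (-(b / (a * (a + Fintype.card n * b)))) • allOnes n 𝕜) = 1 := by
  rw [smul_one_add_smul_allOnes_mul, mul_inv_cancel₀ ha, one_smul]
  convert add_zero (1 : Matrix n n 𝕜)
  convert zero_smul 𝕜 (allOnes n 𝕜)
  have h : (a + Fintype.card n * b) * (b / (a * (a + Fintype.card n * b))) = b * a⁻¹ := by
    field_simp
  linear_combination -h

lemma isUnit_smul_one_add_smul_allOnes {a b : 𝕜} (ha : a ≠ 0)
    (hab : a + Fintype.card n * b ≠ 0) : IsUnit (a • 1 + b • allOnes n 𝕜) :=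
  (isUnit_iff_isUnit_det _).mpr
    (isUnit_det_of_right_inverse (smul_one_add_smul_allOnes_mul_inv ha hab))

lemma inv_smul_one_add_smul_allOnes {a b : 𝕜} (ha : a ≠ 0)
    (hab : a + Fintype.card n * b ≠ 0) :
    (a • 1 + b • allOnes n 𝕜)⁻¹ =
      a⁻¹ • 1 + (-(b / (a * (a + Fintype.card n * b)))) • allOnes n 𝕜 :=
  inv_eq_right_inv (smul_one_add_smul_allOnes_mul_inv ha hab)

end AllOnes

lemma Phi_smul_one_add_smul_allOnes {K : ℕ} {a b : ℝ} (ha : a ≠ 0) (hab : a + K * b = 1) :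
    Phi (a • 1 + b • allOnes (Fin K) ℝ) =
      ((1 - 2 * b) / a) • 1 + (b * (1 - b) / a ^ 2) • allOnes (Fin K) ℝ := by
  have hab' : a + Fintype.card (Fin K) * b ≠ 0 := by simp [hab]
  rw [Phi, inv_smul_one_add_smul_allOnes ha hab', smul_one_add_smul_allOnes_hadamard,
    smul_one_add_smul_allOnes_mul]
  obtain rfl : a = 1 - K * b := by linarith
  simp only [Fintype.card_fin, hab]
  congr 2 <;> field_simp <;> ring

lemma stepMech_eq_smul_one_add_smul_allOnes (K : ℕ) (ε : ℝ) (hs : Real.exp ε + K - 1 ≠ 0) :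
    stepMech K ε =
      ((Real.exp ε - 1) / (Real.exp ε + K - 1)) • 1 +
        (1 / (Real.exp ε + K - 1)) • allOnes (Fin K) ℝ := by
  ext i j
  rw [smul_one_add_smul_allOnes_apply, stepMech, of_apply]
  split_ifs
  · field_simp
    ring
  · rfl

theorem stmt_11_general (K : ℕ) (ε : ℝ) (hε : 0 < ε) :
    IsUnit (stepMech K ε) ∧
    (∀ k l, Phi (stepMech K ε) k l =
      1 / (Real.exp ε - 1) ^ 2 *
        (if k = l then Real.exp ε * (Real.exp ε + K - 2) + 1 - Real.exp ε
         else Real.exp ε + K - 2)) ∧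
    phiSum (stepMech K ε) =
      K / (Real.exp ε - 1) ^ 2 *
        ((Real.exp ε + K - 1) * (Real.exp ε + K - 2) + 1 - Real.exp ε) := by
  have he : 1 < Real.exp ε := Real.one_lt_exp_iff.mpr hε
  have hs : Real.exp ε + K - 1 ≠ 0 := by
    have : (0 : ℝ) ≤ K := K.cast_nonneg
    exact (by linarith : 0 < Real.exp ε + K - 1).ne'
  have ha : (Real.exp ε - 1) / (Real.exp ε + K - 1) ≠ 0 := div_ne_zero (by linarith) hs
  have hab : (Real.exp ε - 1) / (Real.exp ε + K - 1) + K * (1 / (Real.exp ε + K - 1)) = 1 := by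
    field_simp
    ring
  have hPhi := Phi_smul_one_add_smul_allOnes ha hab
  rw [← stepMech_eq_smul_one_add_smul_allOnes K ε hs] at hPhi
  refine ⟨?_, fun k l => ?_, ?_⟩
  · rw [stepMech_eq_smul_one_add_smul_allOnes K ε hs]
    exact isUnit_smul_one_add_smul_allOnes ha (by simpa using hab.trans_ne one_ne_zero)
  · rw [hPhi, smul_one_add_smul_allOnes_apply, mul_ite]
    split_ifs <;> field_simp <;> ring
  · rw [phiSum, hPhi, sum_sum_smul_one_add_smul_allOnes, Fintype.card_fin]
    field_simp
    ring

/-- closed forms of `Φ` and `φ` for the step mechanism. -/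
theorem stmt_11 (K : ℕ) (hK : 2 ≤ K) (ε : ℝ) (hε : 0 < ε) :
    IsUnit (stepMech K ε) ∧
    (∀ k l, Phi (stepMech K ε) k l =
      1 / (Real.exp ε - 1) ^ 2 *
        (if k = l then Real.exp ε * (Real.exp ε + K - 2) + 1 - Real.exp ε
         else Real.exp ε + K - 2)) ∧
    phiSum (stepMech K ε) =
      K / (Real.exp ε - 1) ^ 2 *
        ((Real.exp ε + K - 1) * (Real.exp ε + K - 2) + 1 - Real.exp ε) :=
  stmt_11_general K ε hε

end RRStmt
end

section
/- Let p be a probability vector on [K] with all entries positive, let Φ be a K×K matrix with nonnegative entries, and let Π_{[i,j]} be the permutation matrix swapping coordinates i and j (i ≠ j). Then the function λ ↦ q(λ)·Φ·q(λ)^{−T}, where q(λ) = λp + (1−λ)pΠ_{[i,j]} and q^{−T} denotes the column vector of entrywise reciprocals of q, is convex on [0,1]. -/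
/-!
Each summand is a linear-fractional function `(a λ + b) / (c λ + d)` with positive denominator on
`[0, 1]`. For `c ≠ 0` it equals `a / c + ((b c - a d) / c) (c λ + d)⁻¹`, so it is convex as soon as
`c (b c - a d) ≥ 0`. Along a transposition `c = p m - p (σ m)` vanishes unless `m ∈ {i, j}`, and in
the remaining cases `c (b c - a d)` is `Φ k m` times `0`, `(p i + p j) (p i - p j) ^ 2` or
`p k (p i - p j) ^ 2`.
-/


open Finset Filter Asymptotics

open Equiv

theorem ConvexOn.sum {𝕜 E β ι : Type*} [Semiring 𝕜] [PartialOrder 𝕜] [AddCommMonoid E]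
    [AddCommMonoid β] [PartialOrder β] [IsOrderedAddMonoid β] [SMul 𝕜 E] [DistribMulAction 𝕜 β]
    {s : Set E} {t : Finset ι} {f : ι → E → β} (hs : Convex 𝕜 s)
    (hf : ∀ i ∈ t, ConvexOn 𝕜 s (f i)) : ConvexOn 𝕜 s fun x => ∑ i ∈ t, f i x :=
  ⟨hs, fun x hx y hy a b ha hb hab => by
    simp only [Finset.smul_sum, ← Finset.sum_add_distrib]
    exact Finset.sum_le_sum fun i hi => (hf i hi).2 hx hy ha hb hab⟩

theorem convexOn_inv_affine {s : Set ℝ} {c d : ℝ} (hs : Convex ℝ s)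
    (hpos : ∀ t ∈ s, 0 < c * t + d) : ConvexOn ℝ s fun t => (c * t + d)⁻¹ := by
  have h := ((convexOn_zpow (𝕜 := ℝ) (-1)).comp_affineMap
    (c • AffineMap.id ℝ ℝ + AffineMap.const ℝ ℝ d)).subset hpos hs
  simpa [Function.comp_def] using h

theorem convexOn_div_affine {s : Set ℝ} {a b c d : ℝ} (hs : Convex ℝ s)
    (hpos : ∀ t ∈ s, 0 < c * t + d) (hcross : 0 ≤ c * (b * c - a * d)) :
    ConvexOn ℝ s fun t => (a * t + b) / (c * t + d) := by
  rcases eq_or_ne c 0 with rfl | hc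
  · exact (LinearMap.convexOn ((a / d) • LinearMap.id) hs).add_const (b / d) |>.congr
      fun t _ => by
        simp only [LinearMap.coe_smul, LinearMap.id_coe, Pi.add_apply, Pi.smul_apply, id_eq,
          smul_eq_mul, zero_mul, zero_add]
        ring
  · have hk : 0 ≤ (b * c - a * d) / c := by
      rw [show (b * c - a * d) / c = c * (b * c - a * d) / c ^ 2 by field_simp]
      exact div_nonneg hcross (sq_nonneg c)
    refine (((convexOn_inv_affine hs hpos).smul hk).add_const (a / c)).congr fun t ht => ?_
    have := (hpos t ht).ne'
    simp only [Pi.add_apply, smul_eq_mul]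
    field_simp
    ring

theorem swap_cross_nonneg_left {ι : Type*} [DecidableEq ι] {p : ι → ℝ} (hp : ∀ k, 0 ≤ p k)
    (i j k : ι) : 0 ≤ (p i - p j) * (p (swap i j k) * p i - p k * p j) := by
  rcases eq_or_ne k i with rfl | hki
  · rw [swap_apply_left, mul_comm (p j), sub_self, mul_zero]
  rcases eq_or_ne k j with rfl | hkj
  · rw [swap_apply_right,
      show (p i - p k) * (p i * p i - p k * p k) = (p i + p k) * (p i - p k) ^ 2 by ring]
    exact mul_nonneg (add_nonneg (hp i) (hp k)) (sq_nonneg _)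
  · rw [swap_apply_of_ne_of_ne hki hkj,
      show (p i - p j) * (p k * p i - p k * p j) = p k * (p i - p j) ^ 2 by ring]
    exact mul_nonneg (hp k) (sq_nonneg _)

theorem swap_cross_nonneg {ι : Type*} [DecidableEq ι] {p : ι → ℝ} (hp : ∀ k, 0 ≤ p k)
    (i j k m : ι) :
    0 ≤ (p m - p (swap i j m)) * (p (swap i j k) * p m - p k * p (swap i j m)) := by
  rcases eq_or_ne m i with rfl | hmi
  · rw [swap_apply_left]; exact swap_cross_nonneg_left hp m j k
  rcases eq_or_ne m j with rfl | hmj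
  · rw [swap_apply_right, swap_comm]; exact swap_cross_nonneg_left hp m i k
  · rw [swap_apply_of_ne_of_ne hmi hmj, sub_self, zero_mul]

namespace RRStmt

theorem stmt_13_general (K : ℕ)
    (p : Fin K → ℝ) (hp : ∀ k, 0 < p k)
    (Φ : Matrix (Fin K) (Fin K) ℝ) (hΦ : ∀ k l, 0 ≤ Φ k l)
    (i j : Fin K) :
    ConvexOn ℝ (Set.Icc (0 : ℝ) 1)
      (fun l : ℝ => ∑ k, ∑ m,
        (l * p k + (1 - l) * p (Equiv.swap i j k)) * Φ k m /
          (l * p m + (1 - l) * p (Equiv.swap i j m))) := by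
  refine ConvexOn.sum (convex_Icc 0 1) fun k _ =>
    ConvexOn.sum (convex_Icc 0 1) fun m _ => ?_
  set σ := Equiv.swap i j
  have hden : ∀ l ∈ Set.Icc (0 : ℝ) 1, 0 < (p m - p (σ m)) * l + p (σ m) := fun l hl => by
    have := convex_Ioi (0 : ℝ) (hp m) (hp (σ m)) hl.1 (sub_nonneg.2 hl.2) (add_sub_cancel l 1)
    simp only [smul_eq_mul, Set.mem_Ioi] at this
    linarith
  have hcross : 0 ≤ (p m - p (σ m)) *
      (p (σ k) * Φ k m * (p m - p (σ m)) - (p k - p (σ k)) * Φ k m * p (σ m)) := by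
    have := mul_nonneg (hΦ k m) (swap_cross_nonneg (fun k => (hp k).le) i j k m)
    linarith
  exact (convexOn_div_affine (convex_Icc 0 1) hden hcross).congr fun l _ => by ring

/-- convexity of `λ ↦ q(λ)·Φ·q(λ)^{−T}` along a transposition segment. -/
theorem stmt_13 (K : ℕ) (hK : 2 ≤ K)
    (p : Fin K → ℝ) (hp : ∀ k, 0 < p k) (hpsum : ∑ k, p k = 1)
    (Φ : Matrix (Fin K) (Fin K) ℝ) (hΦ : ∀ k l, 0 ≤ Φ k l)
    (i j : Fin K) (hij : i ≠ j) :
    ConvexOn ℝ (Set.Icc (0 : ℝ) 1)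
      (fun l : ℝ => ∑ k, ∑ m,
        (l * p k + (1 - l) * p (Equiv.swap i j k)) * Φ k m /
          (l * p m + (1 - l) * p (Equiv.swap i j m))) :=
  stmt_13_general K p hp Φ hΦ i j

end RRStmt
end

section
/- Let W be an invertible circulant K×K row-stochastic matrix with first row w, and let λ₁,…,λ_K be its eigenvalues given by the discrete Fourier transform λ_k = Σ_{ℓ=1}^{K} w_ℓ · exp(−2πi(k−1)(ℓ−1)/K), so that λ₁ = 1 and all λ_k ≠ 0. Then φ(W) = 1 + Σ_{k=2}^{K} 1/|λ_k|². -/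
open Finset Filter Asymptotics

namespace RRStmt

/-! The inverse of a circulant matrix is again circulant, say with first row `v`, so every row
of `W⁻¹ ⊙ W⁻¹` sums to `‖v‖²` and, the rows of `W` summing to one, `φ(W) = K ‖v‖²`. The vectors
`(ξ ^ j)ⱼ`, `ξ` a `K`-th root of unity, are common eigenvectors of all circulant matrices, so the
eigenvalues of `W⁻¹` are the `1 / λ_k`, and Parseval's identity turns `K ‖v‖²` into
`∑ₖ 1 / |λ_k|²`. -/

open ComplexConjugate Matrix

variable {K : ℕ}

theorem inv_apply_eq_inv_apply_zero_sub {G R : Type*} [AddCommGroup G] [Fintype G]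
    [DecidableEq G] [CommRing R] {A : Matrix G G R} {a : G → R}
    (hA : ∀ i j, A i j = a (j - i)) (i j : G) : A⁻¹ i j = A⁻¹ 0 (j - i) := by
  have hshift : A.submatrix (Equiv.addRight (-i)) (Equiv.addRight (-i)) = A := by
    ext k l
    simp only [Matrix.submatrix_apply, Equiv.coe_addRight, hA, add_sub_add_right_eq_sub]
  have := congrArg (fun M : Matrix G G R => M⁻¹ i j) hshift
  simp only [Matrix.inv_submatrix_equiv, Matrix.submatrix_apply] at this
  simpa [sub_eq_add_neg] using this.symm

theorem phiSum_eq_card_mul_sum_sq [NeZero K] {W : Matrix (Fin K) (Fin K) ℝ}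
    (hW : ∀ i, ∑ j, W i j = 1) {v : Fin K → ℝ} (hv : ∀ i j, W⁻¹ i j = v (j - i)) :
    phiSum W = K * ∑ l, v l ^ 2 := by
  have hrow (j : Fin K) : ∑ l, W⁻¹ j l * W⁻¹ j l = ∑ l, v l ^ 2 := by
    simp_rw [hv, ← sq]
    exact Equiv.sum_comp (Equiv.subRight j) (fun l => v l ^ 2)
  calc phiSum W = ∑ k, ∑ j, W k j * ∑ l, W⁻¹ j l * W⁻¹ j l := by
        simp only [phiSum, Phi, Matrix.mul_apply, Matrix.hadamard_apply, Finset.mul_sum]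
        exact Finset.sum_congr rfl fun k _ => Finset.sum_comm
    _ = K * ∑ l, v l ^ 2 := by
        simp [hrow, ← Finset.sum_mul, hW]

def circEigenvalue {R : Type*} [CommSemiring R] (a : Fin K → R) (ξ : R) : R :=
  ∑ m, a m * ξ ^ (m : ℕ)

section CommSemiring

variable {R : Type*} [CommSemiring R] {ξ : R}

theorem pow_val_add_of_pow_eq_one [NeZero K] (hξ : ξ ^ K = 1) (a b : Fin K) :
    ξ ^ ((a + b : Fin K) : ℕ) = ξ ^ (a : ℕ) * ξ ^ (b : ℕ) := by
  rw [Fin.val_add, ← pow_eq_pow_mod _ hξ, pow_add]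

theorem mulVec_pow_eq_circEigenvalue_smul [NeZero K] {A : Matrix (Fin K) (Fin K) R}
    {a : Fin K → R} (hA : ∀ i j, A i j = a (j - i)) (hξ : ξ ^ K = 1) :
    A *ᵥ (fun j : Fin K => ξ ^ (j : ℕ)) = circEigenvalue a ξ • fun j : Fin K => ξ ^ (j : ℕ) := by
  ext i
  simp only [Matrix.mulVec, dotProduct, hA, Pi.smul_apply, smul_eq_mul, circEigenvalue,
    Finset.sum_mul]
  refine Fintype.sum_equiv (Equiv.subRight i) _ _ fun j => ?_
  simp only [Equiv.subRight_apply]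
  rw [mul_assoc, ← pow_val_add_of_pow_eq_one hξ, sub_add_cancel]

theorem circEigenvalue_mul_eq_one [NeZero K] {A B : Matrix (Fin K) (Fin K) R}
    {a b : Fin K → R} (hA : ∀ i j, A i j = a (j - i)) (hB : ∀ i j, B i j = b (j - i))
    (hAB : A * B = 1) (hξ : ξ ^ K = 1) : circEigenvalue a ξ * circEigenvalue b ξ = 1 := by
  have h := congrFun (congrArg (· *ᵥ fun j : Fin K => ξ ^ (j : ℕ)) hAB) 0
  simp only [← Matrix.mulVec_mulVec, mulVec_pow_eq_circEigenvalue_smul hB hξ,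
    Matrix.mulVec_smul, mulVec_pow_eq_circEigenvalue_smul hA hξ, Matrix.one_mulVec] at h
  simpa [mul_comm] using h

end CommSemiring

theorem _root_.IsPrimitiveRoot.sum_pow_mul_conj_pow {ζ : ℂ} (hζ : IsPrimitiveRoot ζ K)
    (l m : Fin K) :
    ∑ k : Fin K, (ζ ^ (k : ℕ)) ^ (l : ℕ) * conj ((ζ ^ (k : ℕ)) ^ (m : ℕ)) =
      if l = m then (K : ℂ) else 0 := by
  have hK : K ≠ 0 := by rintro rfl; exact l.elim0
  have hζ0 : ζ ≠ 0 := hζ.ne_zero hK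
  set c := ζ ^ (l : ℕ) * ζ⁻¹ ^ (m : ℕ)
  have hterm (k : Fin K) :
      (ζ ^ (k : ℕ)) ^ (l : ℕ) * conj ((ζ ^ (k : ℕ)) ^ (m : ℕ)) = c ^ (k : ℕ) := by
    rw [map_pow, map_pow, ← Complex.inv_eq_conj (hζ.norm'_eq_one hK), mul_pow, ← pow_mul,
      ← pow_mul, ← pow_mul, ← pow_mul, mul_comm (k : ℕ), mul_comm (k : ℕ)]
  simp only [hterm]
  split_ifs with hlm
  · subst hlm
    simp [c, ← mul_pow, mul_inv_cancel₀ hζ0]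
  · have hc : c ≠ 1 := fun h => hlm <| Fin.ext <| hζ.pow_inj l.isLt m.isLt <|
      (mul_inv_eq_one₀ (pow_ne_zero _ hζ0)).mp (by rwa [← inv_pow])
    have hcK : c ^ K = 1 := by
      rw [mul_pow, ← pow_mul, ← pow_mul, mul_comm _ K, mul_comm _ K, pow_mul, pow_mul,
        hζ.pow_eq_one, hζ.inv.pow_eq_one, one_pow, one_pow, one_mul]
    rw [Fin.sum_univ_eq_sum_range (c ^ ·), geom_sum_eq hc, hcK, sub_self, zero_div]

theorem sum_norm_sq_circEigenvalue {ζ : ℂ} (hζ : IsPrimitiveRoot ζ K) (x : Fin K → ℂ) :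
    ∑ k : Fin K, ‖circEigenvalue x (ζ ^ (k : ℕ))‖ ^ 2 = K * ∑ l, ‖x l‖ ^ 2 := by
  apply Complex.ofReal_injective
  push_cast
  simp only [← Complex.mul_conj', circEigenvalue, map_sum, map_mul, Finset.sum_mul_sum]
  calc _ = ∑ l, ∑ m, x l * conj (x m) *
        ∑ k : Fin K, (ζ ^ (k : ℕ)) ^ (l : ℕ) * conj ((ζ ^ (k : ℕ)) ^ (m : ℕ)) := by
        rw [Finset.sum_comm]
        refine Finset.sum_congr rfl fun l _ => ?_
        rw [Finset.sum_comm]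
        simp only [Finset.mul_sum]
        exact Finset.sum_congr rfl fun m _ => Finset.sum_congr rfl fun k _ => by ring
    _ = _ := by
        simp only [hζ.sum_pow_mul_conj_pow, mul_ite, mul_zero, Finset.sum_ite_eq,
          Finset.mem_univ, if_true, Finset.mul_sum]
        exact Finset.sum_congr rfl fun l _ => mul_comm _ _

theorem circEigenvalue_mul_circEigenvalue_inv [NeZero K] {W : Matrix (Fin K) (Fin K) ℝ}
    (hWinv : IsUnit W) {w : Fin K → ℝ} (hWc : ∀ i j, W i j = w (j - i)) {ξ : ℂ}
    (hξ : ξ ^ K = 1) :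
    circEigenvalue (fun l => (w l : ℂ)) ξ * circEigenvalue (fun l => (W⁻¹ 0 l : ℂ)) ξ = 1 := by
  refine circEigenvalue_mul_eq_one (A := W.map Complex.ofRealHom)
    (B := W⁻¹.map Complex.ofRealHom) (fun i j => by simp [hWc])
    (fun i j => by simp [inv_apply_eq_inv_apply_zero_sub hWc i j]) ?_ hξ
  rw [← Matrix.map_mul, Matrix.mul_nonsing_inv W ((Matrix.isUnit_iff_isUnit_det W).mp hWinv),
    Matrix.map_one _ (map_zero _) (map_one _)]

theorem isPrimitiveRoot_exp_neg_two_pi_I_div (K : ℕ) (hK : K ≠ 0) :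
    IsPrimitiveRoot (Complex.exp (-2 * Real.pi * Complex.I / K)) K := by
  simpa [← Complex.exp_neg, neg_div] using (Complex.isPrimitiveRoot_exp K hK).inv

theorem exp_neg_two_pi_I_mul_mul_div (K k l : ℕ) :
    Complex.exp (-2 * Real.pi * Complex.I * k * l / K) =
      (Complex.exp (-2 * Real.pi * Complex.I / K) ^ k) ^ l := by
  rw [← pow_mul, ← Complex.exp_nat_mul]
  congr 1
  push_cast
  ring

theorem stmt_16_general (K : ℕ) (hK : 2 ≤ K)
    (W : Matrix (Fin K) (Fin K) ℝ) (hW : RowStochastic W) (hWinv : IsUnit W)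
    (w : Fin K → ℝ) (hWc : ∀ i j, W i j = w (j - i))
    (lam : Fin K → ℂ)
    (hlam : ∀ k, lam k = ∑ l, (w l : ℂ) *
      Complex.exp (-2 * Real.pi * Complex.I * ((k : ℕ) : ℂ) * ((l : ℕ) : ℂ) / K)) :
    phiSum W = 1 + ∑ k ∈ Finset.univ.filter (fun k : Fin K => (k : ℕ) ≠ 0),
      1 / ‖lam k‖ ^ 2 := by
  have : NeZero K := ⟨by omega⟩
  set ζ := Complex.exp (-2 * Real.pi * Complex.I / K)
  have hζ : IsPrimitiveRoot ζ K := isPrimitiveRoot_exp_neg_two_pi_I_div K (NeZero.ne K)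
  have hlam_eq (k : Fin K) : lam k = circEigenvalue (fun l => (w l : ℂ)) (ζ ^ (k : ℕ)) := by
    simp only [hlam, circEigenvalue, exp_neg_two_pi_I_mul_mul_div, ζ]
  have hlam_inv (k : Fin K) :
      circEigenvalue (fun l => (W⁻¹ 0 l : ℂ)) (ζ ^ (k : ℕ)) = (lam k)⁻¹ :=
    eq_inv_of_mul_eq_one_right <| hlam_eq k ▸ circEigenvalue_mul_circEigenvalue_inv hWinv hWc
      (by rw [← pow_mul, mul_comm, pow_mul, hζ.pow_eq_one, one_pow])
  have hlam_zero : lam 0 = 1 := by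
    have hw : ∑ l, w l = 1 := by simpa [hWc] using hW.2 0
    simp [hlam_eq, circEigenvalue, ← Complex.ofReal_sum, hw]
  calc phiSum W = K * ∑ l, W⁻¹ 0 l ^ 2 :=
        phiSum_eq_card_mul_sum_sq hW.2 (inv_apply_eq_inv_apply_zero_sub hWc)
    _ = ∑ k : Fin K, 1 / ‖lam k‖ ^ 2 := by
        simpa [hlam_inv] using (sum_norm_sq_circEigenvalue hζ fun l => (W⁻¹ 0 l : ℂ)).symm
    _ = _ := by
        rw [← Finset.add_sum_erase _ _ (Finset.mem_univ 0), hlam_zero]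
        simp [Fin.val_eq_zero_iff, Finset.filter_ne']

/-- `φ(W)` in terms of the eigenvalues (DFT of the first row) of a
circulant mechanism. -/
theorem stmt_16 (K : ℕ) (hK : 2 ≤ K)
    (W : Matrix (Fin K) (Fin K) ℝ) (hW : RowStochastic W) (hWinv : IsUnit W)
    (w : Fin K → ℝ) (hWc : ∀ i j, W i j = w (j - i))
    (lam : Fin K → ℂ)
    (hlam : ∀ k, lam k = ∑ l, (w l : ℂ) *
      Complex.exp (-2 * Real.pi * Complex.I * ((k : ℕ) : ℂ) * ((l : ℕ) : ℂ) / K))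
    (hlam1 : ∀ k : Fin K, (k : ℕ) = 0 → lam k = 1)
    (hlamne : ∀ k, lam k ≠ 0) :
    phiSum W = 1 + ∑ k ∈ Finset.univ.filter (fun k : Fin K => (k : ℕ) ≠ 0),
      1 / ‖lam k‖ ^ 2 :=
  stmt_16_general K hK W hW hWinv w hWc lam hlam

end RRStmt
end

section
/- Fix ε > 0 and K ≥ 2, and let W be a K×K row-stochastic ε-private matrix with columns w₁,…,w_K (viewed as vectors in ℝ^K), each nonzero. Then for any two distinct columns k ≠ k', ⟨w_k, w_{k'}⟩ ≥ e^{−2ε} · ‖w_k‖₂ · ‖w_{k'}‖₂. If moreover W is invertible with w̃₁,…,w̃_K the rows of W⁻¹, then for every m ∈ [K], ‖w_m‖₂² · ‖w̃_m‖₂² ≥ 1/(1 − e^{−4ε}), and consequently φ(W) = Σ_{m=1}^{K} ‖w_m‖₁ · ‖w̃_m‖₂² ≥ ( 1/(1 − e^{−4ε}) ) · Σ_{m=1}^{K} ‖w_m‖₁ / ‖w_m‖₂². -/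
open Finset Filter Asymptotics

namespace RRStmt

/-- column-angle bounds for ε-private mechanisms and the resulting
lower bound on `φ(W)`. -/
theorem stmt_18 (K : ℕ) (hK : 2 ≤ K) (ε : ℝ) (hε : 0 < ε)
    (W : Matrix (Fin K) (Fin K) ℝ) (hW : RowStochastic W) (hpriv : EpsPrivate ε W)
    (hcol : ∀ m, ∃ j, W j m ≠ 0) :
    (∀ k k', k ≠ k' →
      Real.exp (-2 * ε) * Real.sqrt (∑ j, (W j k) ^ 2) * Real.sqrt (∑ j, (W j k') ^ 2)
        ≤ ∑ j, W j k * W j k') ∧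
    (IsUnit W →
      (∀ m, 1 / (1 - Real.exp (-4 * ε)) ≤ (∑ j, (W j m) ^ 2) * (∑ l, (W⁻¹ m l) ^ 2)) ∧
      phiSum W = ∑ m, (∑ j, |W j m|) * (∑ l, (W⁻¹ m l) ^ 2) ∧
      phiSum W ≥ 1 / (1 - Real.exp (-4 * ε)) *
        ∑ m, (∑ j, |W j m|) / (∑ j, (W j m) ^ 2)) := by
  obtain ⟨hWnn, hWrow⟩ := hW
  have hSpos : ∀ m, 0 < ∑ j, (W j m) ^ 2 := by
    intro m
    obtain ⟨j, hj⟩ := hcol m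
    exact Finset.sum_pos' (fun i _ => sq_nonneg _)
      ⟨j, Finset.mem_univ j, by positivity⟩
  have hPnn : ∀ k k', 0 ≤ ∑ j, W j k * W j k' := fun k k' =>
    Finset.sum_nonneg fun j _ => mul_nonneg (hWnn j k) (hWnn j k')
  -- Part 1
  have part1 : ∀ k k', k ≠ k' →
      Real.exp (-2 * ε) * Real.sqrt (∑ j, (W j k) ^ 2) * Real.sqrt (∑ j, (W j k') ^ 2)
        ≤ ∑ j, W j k * W j k' := by
    intro k k' _
    set a : Fin K → ℝ := fun j => W j k with ha
    set b : Fin K → ℝ := fun j => W j k' with hb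
    have key : (∑ i, a i ^ 2) * (∑ j, b j ^ 2)
        ≤ Real.exp (4 * ε) * (∑ j, a j * b j) ^ 2 := by
      have h1 : (∑ i, a i ^ 2) * (∑ j, b j ^ 2)
          = ∑ i, ∑ j, a i ^ 2 * b j ^ 2 := by
        rw [Finset.sum_mul_sum]
      have h2 : (∑ j, a j * b j) ^ 2
          = ∑ i, ∑ j, (a i * b i) * (a j * b j) := by
        rw [sq, Finset.sum_mul_sum]
      rw [h1, h2, Finset.mul_sum]
      refine Finset.sum_le_sum fun i _ => ?_
      rw [Finset.mul_sum]
      refine Finset.sum_le_sum fun j _ => ?_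
      have hai : a i ≤ Real.exp ε * a j := hpriv i j k
      have hbj : b j ≤ Real.exp ε * b i := hpriv j i k'
      have han : 0 ≤ a i := hWnn i k
      have hbn : 0 ≤ b j := hWnn j k'
      have han' : 0 ≤ a j := hWnn j k
      have hbn' : 0 ≤ b i := hWnn i k'
      have hE : 1 ≤ Real.exp ε := Real.one_le_exp hε.le
      have hE4 : Real.exp (4 * ε) = Real.exp ε ^ 4 := by
        rw [← Real.exp_nat_mul]; norm_num [mul_comm]
      rw [hE4]
      calc a i ^ 2 * b j ^ 2 = (a i * b j) * (a i * b j) := by ring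
        _ ≤ ((Real.exp ε * a j) * (Real.exp ε * b i)) * (a i * b j) :=
            mul_le_mul_of_nonneg_right
              (mul_le_mul hai hbj hbn (by positivity)) (mul_nonneg han hbn)
        _ = Real.exp ε ^ 2 * (a i * b i * (a j * b j)) := by ring
        _ ≤ Real.exp ε ^ 4 * (a i * b i * (a j * b j)) :=
            mul_le_mul_of_nonneg_right (pow_le_pow_right₀ hE (by norm_num))
              (mul_nonneg (mul_nonneg han hbn') (mul_nonneg han' hbn))
    have hL : 0 ≤ Real.exp (-2 * ε) * Real.sqrt (∑ j, a j ^ 2) * Real.sqrt (∑ j, b j ^ 2) := by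
      positivity
    have hsq : (Real.exp (-2 * ε) * Real.sqrt (∑ j, a j ^ 2) * Real.sqrt (∑ j, b j ^ 2)) ^ 2
        ≤ (∑ j, a j * b j) ^ 2 := by
      have e1 : (Real.exp (-2 * ε) * Real.sqrt (∑ j, a j ^ 2) * Real.sqrt (∑ j, b j ^ 2)) ^ 2
          = Real.exp (-2 * ε) ^ 2 * ((∑ j, a j ^ 2) * (∑ j, b j ^ 2)) := by
        rw [mul_pow, mul_pow, Real.sq_sqrt (Finset.sum_nonneg fun j _ => sq_nonneg _),
          Real.sq_sqrt (Finset.sum_nonneg fun j _ => sq_nonneg _)]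
        ring
      have e2 : Real.exp (-2 * ε) ^ 2 * Real.exp (4 * ε) = 1 := by
        rw [sq, ← Real.exp_add, ← Real.exp_add, Real.exp_eq_one_iff]; ring
      calc (Real.exp (-2 * ε) * Real.sqrt (∑ j, a j ^ 2) * Real.sqrt (∑ j, b j ^ 2)) ^ 2
          = Real.exp (-2 * ε) ^ 2 * ((∑ j, a j ^ 2) * (∑ j, b j ^ 2)) := e1
        _ ≤ Real.exp (-2 * ε) ^ 2 * (Real.exp (4 * ε) * (∑ j, a j * b j) ^ 2) := by
            exact mul_le_mul_of_nonneg_left key (sq_nonneg _)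
        _ = Real.exp (-2 * ε) ^ 2 * Real.exp (4 * ε) * (∑ j, a j * b j) ^ 2 := by ring
        _ = (∑ j, a j * b j) ^ 2 := by rw [e2, one_mul]
    calc Real.exp (-2 * ε) * Real.sqrt (∑ j, a j ^ 2) * Real.sqrt (∑ j, b j ^ 2)
        = Real.sqrt ((Real.exp (-2 * ε) * Real.sqrt (∑ j, a j ^ 2)
            * Real.sqrt (∑ j, b j ^ 2)) ^ 2) := (Real.sqrt_sq hL).symm
      _ ≤ Real.sqrt ((∑ j, a j * b j) ^ 2) := Real.sqrt_le_sqrt hsq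
      _ = ∑ j, a j * b j := Real.sqrt_sq (hPnn k k')
  refine ⟨part1, fun hU => ?_⟩
  have hc : 0 < 1 - Real.exp (-4 * ε) := by
    have : Real.exp (-4 * ε) < 1 := Real.exp_lt_one_iff.mpr (by linarith)
    linarith
  have hinv : W⁻¹ * W = 1 :=
    Matrix.nonsing_inv_mul W ((Matrix.isUnit_iff_isUnit_det W).mp hU)
  have horth : ∀ m k, ∑ j, W⁻¹ m j * W j k = if m = k then 1 else 0 := by
    intro m k
    have := congrFun (congrFun hinv m) k
    simpa [Matrix.mul_apply, Matrix.one_apply] using this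
  -- Part 2
  have part2 : ∀ m, 1 / (1 - Real.exp (-4 * ε))
      ≤ (∑ j, (W j m) ^ 2) * (∑ l, (W⁻¹ m l) ^ 2) := by
    intro m
    have : Nontrivial (Fin K) := Fin.nontrivial_iff_two_le.mpr hK
    obtain ⟨k', hk'⟩ : ∃ k' : Fin K, k' ≠ m := exists_ne m
    set Sm := ∑ j, (W j m) ^ 2 with hSm
    set Sk := ∑ j, (W j k') ^ 2 with hSk
    set P := ∑ j, W j m * W j k' with hP
    set t : ℝ := P / Sk with ht
    have hSkpos : 0 < Sk := hSpos k'
    have hSmpos : 0 < Sm := hSpos m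
    -- inner product of inverse row with the combination
    have hone : ∑ j, W⁻¹ m j * (W j m - t * W j k') = 1 := by
      have h1 : ∑ j, W⁻¹ m j * W j m = 1 := by simpa using horth m m
      have h2 : ∑ j, W⁻¹ m j * W j k' = 0 := by
        have := horth m k'
        rwa [if_neg (Ne.symm hk')] at this
      have : ∑ j, W⁻¹ m j * (W j m - t * W j k')
          = (∑ j, W⁻¹ m j * W j m) - t * ∑ j, W⁻¹ m j * W j k' := by
        rw [Finset.mul_sum, ← Finset.sum_sub_distrib]
        exact Finset.sum_congr rfl fun j _ => by ring
      rw [this, h1, h2]; ring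
    have hCS : (1 : ℝ) ≤ (∑ l, (W⁻¹ m l) ^ 2) * ∑ j, (W j m - t * W j k') ^ 2 := by
      have := Finset.sum_mul_sq_le_sq_mul_sq Finset.univ
        (fun j => W⁻¹ m j) (fun j => W j m - t * W j k')
      rw [hone] at this
      simpa using this
    have hPsq : Real.exp (-4 * ε) * (Sm * Sk) ≤ P ^ 2 := by
      have h := part1 m k' (Ne.symm hk')
      rw [← hSm, ← hSk, ← hP] at h
      have hLnn : 0 ≤ Real.exp (-2 * ε) * Real.sqrt Sm * Real.sqrt Sk := by positivity
      have hmul := mul_self_le_mul_self hLnn h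
      have e1 : Real.exp (-2 * ε) * Real.exp (-2 * ε) = Real.exp (-4 * ε) := by
        rw [← Real.exp_add]; congr 1; ring
      have e2 : Real.sqrt Sm * Real.sqrt Sm = Sm := Real.mul_self_sqrt hSmpos.le
      have e3 : Real.sqrt Sk * Real.sqrt Sk = Sk := Real.mul_self_sqrt hSkpos.le
      have key : (Real.exp (-2 * ε) * Real.sqrt Sm * Real.sqrt Sk)
          * (Real.exp (-2 * ε) * Real.sqrt Sm * Real.sqrt Sk)
          = Real.exp (-4 * ε) * (Sm * Sk) := by
        calc (Real.exp (-2 * ε) * Real.sqrt Sm * Real.sqrt Sk)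
            * (Real.exp (-2 * ε) * Real.sqrt Sm * Real.sqrt Sk)
            = (Real.exp (-2 * ε) * Real.exp (-2 * ε))
              * ((Real.sqrt Sm * Real.sqrt Sm) * (Real.sqrt Sk * Real.sqrt Sk)) := by ring
          _ = Real.exp (-4 * ε) * (Sm * Sk) := by rw [e1, e2, e3]
      rw [← key, sq]
      exact hmul
    have hresid : ∑ j, (W j m - t * W j k') ^ 2 ≤ (1 - Real.exp (-4 * ε)) * Sm := by
      have hexpand : ∑ j, (W j m - t * W j k') ^ 2 = Sm - 2 * t * P + t ^ 2 * Sk := by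
        rw [hSm, hP, hSk, Finset.mul_sum, Finset.mul_sum]
        rw [← Finset.sum_sub_distrib, ← Finset.sum_add_distrib]
        exact Finset.sum_congr rfl fun j _ => by ring
      have hval : Sm - 2 * t * P + t ^ 2 * Sk = Sm - P ^ 2 / Sk := by
        rw [ht]; field_simp; ring
      rw [hexpand, hval]
      have : Real.exp (-4 * ε) * Sm ≤ P ^ 2 / Sk := by
        rw [le_div_iff₀ hSkpos]
        calc Real.exp (-4 * ε) * Sm * Sk = Real.exp (-4 * ε) * (Sm * Sk) := by ring
          _ ≤ P ^ 2 := hPsq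
      linarith
    have hfin : (1:ℝ) ≤ (∑ l, (W⁻¹ m l) ^ 2) * ((1 - Real.exp (-4 * ε)) * Sm) := by
      calc (1:ℝ) ≤ (∑ l, (W⁻¹ m l) ^ 2) * ∑ j, (W j m - t * W j k') ^ 2 := hCS
        _ ≤ (∑ l, (W⁻¹ m l) ^ 2) * ((1 - Real.exp (-4 * ε)) * Sm) := by
            exact mul_le_mul_of_nonneg_left hresid
              (Finset.sum_nonneg fun l _ => sq_nonneg _)
    rw [div_le_iff₀ hc]
    calc (1:ℝ) ≤ (∑ l, (W⁻¹ m l) ^ 2) * ((1 - Real.exp (-4 * ε)) * Sm) := hfin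
      _ = Sm * (∑ l, (W⁻¹ m l) ^ 2) * (1 - Real.exp (-4 * ε)) := by ring
  -- Part 3
  have part3 : phiSum W = ∑ m, (∑ j, |W j m|) * (∑ l, (W⁻¹ m l) ^ 2) := by
    unfold phiSum Phi
    simp only [Matrix.mul_apply, Matrix.hadamard_apply]
    have habs : ∀ m, (∑ j, |W j m|) = ∑ j, W j m := fun m =>
      Finset.sum_congr rfl fun j _ => abs_of_nonneg (hWnn j m)
    calc ∑ k, ∑ l, ∑ j, W k j * (W⁻¹ j l * W⁻¹ j l)
        = ∑ k, ∑ j, ∑ l, W k j * (W⁻¹ j l * W⁻¹ j l) := by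
          exact Finset.sum_congr rfl fun k _ => Finset.sum_comm
      _ = ∑ j, ∑ k, W k j * ∑ l, (W⁻¹ j l) ^ 2 := by
          rw [Finset.sum_comm]
          refine Finset.sum_congr rfl fun j _ => Finset.sum_congr rfl fun k _ => ?_
          rw [Finset.mul_sum]
          exact Finset.sum_congr rfl fun l _ => by ring
      _ = ∑ m, (∑ j, |W j m|) * (∑ l, (W⁻¹ m l) ^ 2) := by
          refine Finset.sum_congr rfl fun m _ => ?_
          rw [habs m, ← Finset.sum_mul]
  refine ⟨part2, part3, ?_⟩
  -- Part 4
  rw [ge_iff_le, part3, Finset.mul_sum]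
  refine Finset.sum_le_sum fun m _ => ?_
  have hL1 : 0 ≤ ∑ j, |W j m| := Finset.sum_nonneg fun j _ => abs_nonneg _
  have hT : 1 / (1 - Real.exp (-4 * ε)) / (∑ j, (W j m) ^ 2) ≤ ∑ l, (W⁻¹ m l) ^ 2 := by
    rw [div_le_iff₀ (hSpos m)]
    calc 1 / (1 - Real.exp (-4 * ε)) ≤ (∑ j, (W j m) ^ 2) * (∑ l, (W⁻¹ m l) ^ 2) :=
        part2 m
      _ = (∑ l, (W⁻¹ m l) ^ 2) * (∑ j, (W j m) ^ 2) := by ring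
  calc 1 / (1 - Real.exp (-4 * ε)) * ((∑ j, |W j m|) / (∑ j, (W j m) ^ 2))
      = (∑ j, |W j m|) * (1 / (1 - Real.exp (-4 * ε)) / (∑ j, (W j m) ^ 2)) := by ring
    _ ≤ (∑ j, |W j m|) * (∑ l, (W⁻¹ m l) ^ 2) := mul_le_mul_of_nonneg_left hT hL1


end RRStmt
end
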